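/- arXiv:1402.5179 — 3 statements merged into one kernel-verified Lean document; each statement's English description precedes it below -/
import Mathlib

section
/- Let λ ∈ ℝ be such that λ ≠ ‖ξ_m + K‖² for every m ∈ ℤ². Then the ℝ²-valued function m ↦ (ξ_m + K)/(‖ξ_m + K‖² − λ)² is summable over ℤ² and ∑_{m ∈ ℤ²} (ξ_m + K)/(‖ξ_m + K‖² − λ)² = 0 in ℝ². -/
open Real

noncomputable section

/-- ℝ² with the Euclidean norm. -/
abbrev E2 := EuclideanSpace ℝ (Fin 2)

/-- Build a vector in ℝ². -/
def vec (x y : ℝ) : E2 := (WithLp.equiv 2 _).symm ![x, y]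

/-- Dual basis vector k₁ = (4π/(a√3))(1/2, √3/2). -/
def k1 (a : ℝ) : E2 := (4 * π / (a * Real.sqrt 3)) • vec (1/2) (Real.sqrt 3 / 2)

/-- Dual basis vector k₂ = (4π/(a√3))(1/2, −√3/2). -/
def k2 (a : ℝ) : E2 := (4 * π / (a * Real.sqrt 3)) • vec (1/2) (-(Real.sqrt 3) / 2)

/-- Dual lattice vector ξ_m = m₁k₁ + m₂k₂. -/
def xiv (a : ℝ) (m : ℤ × ℤ) : E2 := (m.1 : ℝ) • k1 a + (m.2 : ℝ) • k2 a

/-- The Dirac point K = (2/3)k₁ + (1/3)k₂. -/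
def KD (a : ℝ) : E2 := (2/3 : ℝ) • k1 a + (1/3 : ℝ) • k2 a

/-- Lattice basis vector v₁ = a(√3/2, 1/2). -/
def v1 (a : ℝ) : E2 := a • vec (Real.sqrt 3 / 2) (1/2)

/-- Lattice basis vector v₂ = a(√3/2, −1/2). -/
def v2 (a : ℝ) : E2 := a • vec (Real.sqrt 3 / 2) (-(1/2))

/-- x₀ = (2/3)(v₁ + v₂). -/
def x0 (a : ℝ) : E2 := (2/3 : ℝ) • (v1 a + v2 a)

/-- Rotation of ℝ² by 2π/3, i.e. the matrix (1/2)[[−1, −√3], [√3, −1]]. -/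
def Rrot (v : E2) : E2 :=
  vec ((-v 0 - Real.sqrt 3 * v 1) / 2) ((Real.sqrt 3 * v 0 - v 1) / 2)

/-- T(m₁, m₂) = (−m₁ + m₂ − 1, −m₁ − 1). -/
def T (m : ℤ × ℤ) : ℤ × ℤ := (-m.1 + m.2 - 1, -m.1 - 1)


set_option maxHeartbeats 1000000 in
lemma vec_add' (x y x' y' : ℝ) : vec x y + vec x' y' = vec (x+x') (y+y') := by
  ext i; fin_cases i <;> simp [vec]

set_option maxHeartbeats 1000000 in
lemma vec_smul' (c x y : ℝ) : c • vec x y = vec (c*x) (c*y) := by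
  ext i; fin_cases i <;> simp [vec]

lemma vec_congr' {x y x' y' : ℝ} (hx : x = x') (hy : y = y') : vec x y = vec x' y' := by
  rw [hx, hy]

lemma norm_vec_sq' (x y : ℝ) : ‖vec x y‖ ^ 2 = x ^ 2 + y ^ 2 := by
  rw [EuclideanSpace.norm_eq, Real.sq_sqrt (by positivity)]
  simp [vec, Fin.sum_univ_two]

lemma xiK (a : ℝ) (m : ℤ × ℤ) :
    xiv a m + KD a = vec ((4 * π / (a * Real.sqrt 3)) * ((m.1:ℝ) + m.2 + 1) / 2)
      ((4 * π / (a * Real.sqrt 3)) * Real.sqrt 3 * ((m.1:ℝ) - m.2 + 1/3) / 2) := by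
  simp only [xiv, KD, k1, k2, vec_smul', vec_add']
  refine vec_congr' (by ring) (by ring)

lemma Rrot_vec (x y : ℝ) :
    Rrot (vec x y) = vec ((-x - Real.sqrt 3 * y)/2) ((Real.sqrt 3 * x - y)/2) := rfl

set_option maxHeartbeats 1000000 in
lemma norm_Rrot (v : E2) : ‖Rrot v‖ = ‖v‖ := by
  have h3 : Real.sqrt 3 ^ 2 = 3 := Real.sq_sqrt (by norm_num)
  have h : ‖Rrot v‖ ^ 2 = ‖v‖ ^ 2 := by
    have hv : v = vec (v 0) (v 1) := by ext i; fin_cases i <;> rfl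
    rw [Rrot, norm_vec_sq']
    conv_rhs => rw [hv]
    rw [norm_vec_sq']
    nlinarith [h3]
  have := congrArg Real.sqrt h
  rwa [Real.sqrt_sq (norm_nonneg _), Real.sqrt_sq (norm_nonneg _)] at this

set_option maxHeartbeats 1000000 in
lemma rot_identity (a : ℝ) (m : ℤ × ℤ) :
    xiv a (T m) + KD a = Rrot (xiv a m + KD a) := by
  have h3 : Real.sqrt 3 * Real.sqrt 3 = 3 := Real.mul_self_sqrt (by norm_num)
  rw [xiK, xiK, Rrot_vec, T]
  push_cast
  generalize Real.sqrt 3 = u at h3 ⊢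
  refine vec_congr' ?_ ?_
  · linear_combination ((4 * π / (a * u)) * ((m.1:ℝ) - (m.2:ℝ) + 1/3) / 4) * h3
  · ring

set_option maxHeartbeats 1000000 in
lemma rot_sum (v : E2) : v + Rrot v + Rrot (Rrot v) = 0 := by
  have h3 : Real.sqrt 3 * Real.sqrt 3 = 3 := Real.mul_self_sqrt (by norm_num)
  ext i
  fin_cases i
  · simp [Rrot, vec]
    linear_combination (-(v 0) / 4) * h3
  · simp [Rrot, vec]
    linear_combination (-(v 1) / 4) * h3

set_option maxHeartbeats 1000000 in
def Lrot : E2 →L[ℝ] E2 := LinearMap.toContinuousLinearMap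
  { toFun := Rrot
    map_add' := by
      intro u v
      ext i; fin_cases i <;> simp [Rrot, vec] <;> ring
    map_smul' := by
      intro c v
      ext i; fin_cases i <;> simp [Rrot, vec] <;> ring }

lemma Lrot_apply (v : E2) : Lrot v = Rrot v := rfl

set_option maxHeartbeats 1000000 in
lemma norm_sq_lower (a : ℝ) (m : ℤ × ℤ) :
    (4 * π / (a * Real.sqrt 3))^2 / 28 * ((m.1:ℝ)^2 + (m.2:ℝ)^2 + 1)
      ≤ ‖xiv a m + KD a‖ ^ 2 := by
  have h3 : Real.sqrt 3 * Real.sqrt 3 = 3 := Real.mul_self_sqrt (by norm_num)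
  have hc : (0:ℝ) ≤ ((m.1:ℝ) - m.2) * (((m.1:ℝ) - m.2) + 1) := by
    have : (0:ℤ) ≤ (m.1 - m.2) * ((m.1 - m.2) + 1) := by
      rcases le_or_gt 0 (m.1 - m.2) with h | h
      · positivity
      · have h1 := mul_nonneg (by omega : (0:ℤ) ≤ -(m.1 - m.2))
          (by omega : (0:ℤ) ≤ -(m.1 - m.2 + 1))
        nlinarith [h1]
    exact_mod_cast this
  rw [xiK, norm_vec_sq']
  set b := 4 * π / (a * Real.sqrt 3) with hb
  have hb2 : (0:ℝ) ≤ b^2 := sq_nonneg b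
  set x := (m.1:ℝ); set y := (m.2:ℝ)
  have key : (x^2 + y^2 + 1) / 7 ≤ (x+y+1)^2 + 3*(x-y+1/3)^2 := by
    nlinarith [hc, sq_nonneg (13*x+7), sq_nonneg (13*y+7)]
  calc b^2/28 * (x^2+y^2+1) = b^2/4 * ((x^2+y^2+1)/7) := by ring
    _ ≤ b^2/4 * ((x+y+1)^2 + 3*(x-y+1/3)^2) := by
        apply mul_le_mul_of_nonneg_left key (by positivity)
    _ = (b * (x+y+1)/2)^2 + (b * Real.sqrt 3 * (x-y+1/3)/2)^2 := by
        have : Real.sqrt 3 ^ 2 = 3 := by rw [sq]; exact h3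
        nlinarith [this]

set_option maxHeartbeats 1000000 in
lemma summable_main (a : ℝ) (ha : 0 < a) (lam : ℝ) :
    Summable (fun m : ℤ × ℤ =>
      ((‖xiv a m + KD a‖ ^ 2 - lam) ^ 2)⁻¹ • (xiv a m + KD a)) := by
  have hπ := Real.pi_pos
  have hs3 : (0:ℝ) < Real.sqrt 3 := Real.sqrt_pos.mpr (by norm_num)
  set b := 4 * π / (a * Real.sqrt 3) with hbdef
  have hb : 0 < b := by positivity
  set d := Real.sqrt (b^2/28) with hddef
  have hd : 0 < d := Real.sqrt_pos.mpr (by positivity)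
  have hd2 : d^2 = b^2/28 := Real.sq_sqrt (by positivity)
  clear_value b d
  obtain ⟨N, hN⟩ := exists_nat_ge ((2*|lam|+2) * 28 / b^2)
  set g : (ℤ × ℤ) → ℝ := fun m => (4/d^3) * ‖(finTwoArrowEquiv ℤ).symm m‖ ^ (-3:ℝ) with hg
  have hgsum : Summable g := by
    have h1 : Summable fun (x : Fin 2 → ℤ) => (4/d^3) * ‖x‖ ^ (-3:ℝ) :=
      (EisensteinSeries.summable_one_div_norm_rpow (by norm_num)).mul_left _
    exact ((finTwoArrowEquiv ℤ).symm.summable_iff).2 h1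
  apply Summable.of_norm_bounded_eventually hgsum
  rw [Filter.eventually_cofinite]
  have hnorm : ∀ m : ℤ × ℤ, ‖(finTwoArrowEquiv ℤ).symm m‖
      = ((max m.1.natAbs m.2.natAbs : ℕ) : ℝ) := by
    intro m
    rw [EisensteinSeries.norm_eq_max_natAbs]
    simp
  have key : ∀ m : ℤ × ℤ, (N:ℝ) + 1 ≤ ((max m.1.natAbs m.2.natAbs : ℕ) : ℝ) →
      ‖((‖xiv a m + KD a‖ ^ 2 - lam) ^ 2)⁻¹ • (xiv a m + KD a)‖ ≤ g m := by
    intro m hn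
    set n : ℝ := ((max m.1.natAbs m.2.natAbs : ℕ) : ℝ) with hndef
    have hn0 : 0 < n := lt_of_lt_of_le (by positivity) hn
    set A : ℝ := ‖xiv a m + KD a‖ with hA
    have hA0 : 0 ≤ A := norm_nonneg _
    set Q : ℝ := A ^ 2 with hQ
    clear_value n A Q
    have hnsq : n^2 ≤ (m.1:ℝ)^2 + (m.2:ℝ)^2 := by
      have hmax : n = max |(m.1:ℝ)| |(m.2:ℝ)| := by
        rw [hndef]
        push_cast [Nat.cast_natAbs]
        rfl
      rw [hmax]
      rcases max_cases |(m.1:ℝ)| |(m.2:ℝ)| with ⟨he, _⟩ | ⟨he, _⟩ <;> rw [he] <;>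
        nlinarith [sq_abs (m.1:ℝ), sq_abs (m.2:ℝ), sq_nonneg (m.1:ℝ), sq_nonneg (m.2:ℝ)]
    have hlow := norm_sq_lower a m
    rw [← hbdef, ← hA, ← hQ] at hlow
    have hQn : b^2/28 * (n^2 + 1) ≤ Q := le_trans (by nlinarith) hlow
    have hQbig : 2*|lam| + 2 ≤ Q := by
      have h1 : (2*|lam|+2) * 28 / b^2 + 1 ≤ n^2 + 1 := by
        nlinarith [hN, hn]
      have h2 : b^2/28 * ((2*|lam|+2) * 28 / b^2 + 1) ≤ b^2/28 * (n^2+1) :=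
        mul_le_mul_of_nonneg_left h1 (by positivity)
      have h3 : b^2/28 * ((2*|lam|+2) * 28 / b^2 + 1) = (2*|lam|+2) + b^2/28 := by
        field_simp
      nlinarith [h2, h3, hQn, sq_nonneg b]
    have hD : Q/2 + 1 ≤ Q - lam := by
      have : lam ≤ |lam| := le_abs_self lam
      nlinarith [hQbig, this]
    have hD0 : 0 < Q - lam := by nlinarith [hQbig, abs_nonneg lam]
    have hAn : d * n ≤ A := by
      have h1 : (d*n)^2 ≤ Q := by rw [mul_pow, hd2]; nlinarith [hQn]
      nlinarith [h1, mul_nonneg hd.le hn0.le, hA0]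
    have hA0' : 0 < A := lt_of_lt_of_le (by positivity) hAn
    rw [norm_smul, norm_inv, Real.norm_eq_abs, abs_of_nonneg (sq_nonneg _), ← hA]
    have hgm : g m = (4/d^3) * (n^3)⁻¹ := by
      rw [hg]
      simp only
      rw [hnorm m, ← hndef]
      congr 1
      rw [show (-3:ℝ) = -((3:ℕ):ℝ) by norm_num, Real.rpow_neg hn0.le, Real.rpow_natCast]
    rw [hgm]
    have hcube : (d*n)^3 ≤ A^3 := by
      apply pow_le_pow_left₀ (by positivity) hAn
    have hB2 : Q^2/4 ≤ (Q - lam)^2 := by nlinarith [hD, hQbig, abs_nonneg lam]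
    have hQA : Q = A^2 := hQ
    have final : A ≤ (4/d^3 * (n^3)⁻¹) * (Q - lam)^2 := by
      have e2 : (4/d^3 * (n^3)⁻¹) * (Q-lam)^2 = 4 * (Q-lam)^2 / (d*n)^3 := by
        field_simp
      rw [e2, le_div_iff₀ (by positivity)]
      calc A * (d*n)^3 ≤ A * A^3 := by nlinarith [hcube, hA0']
        _ = A^4 := by ring
        _ = Q^2 := by rw [hQA]; ring
        _ ≤ 4 * (Q-lam)^2 := by nlinarith [hB2]
    rw [inv_mul_eq_div, div_le_iff₀ (by positivity)]
    exact le_trans final (le_of_eq (by ring))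
  apply Set.Finite.subset (Set.finite_Icc ((-(N:ℤ), -(N:ℤ))) ((N:ℤ), (N:ℤ)))
  intro m hm
  simp only [Set.mem_setOf_eq] at hm
  have h : ¬ ((N:ℝ) + 1 ≤ ((max m.1.natAbs m.2.natAbs : ℕ) : ℝ)) := fun h => hm (key m h)
  push_neg at h
  have hmax : max m.1.natAbs m.2.natAbs ≤ N := by
    by_contra hcon
    push_neg at hcon
    have h3 : ((N+1:ℕ):ℝ) ≤ ((max m.1.natAbs m.2.natAbs : ℕ) : ℝ) := Nat.cast_le.mpr hcon
    push_cast at h3 h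
    linarith
  rw [Set.mem_Icc]
  constructor <;> constructor <;> simp <;> omega

/-- T as an equiv of ℤ × ℤ. -/
def Tequiv : (ℤ × ℤ) ≃ (ℤ × ℤ) where
  toFun := T
  invFun := fun m => T (T m)
  left_inv := by intro m; simp [T, Prod.ext_iff]
  right_inv := by intro m; simp [T, Prod.ext_iff]

/-- the ℝ²-valued function m ↦ (ξ_m + K)/(‖ξ_m + K‖² − λ)² is
summable over ℤ² with sum 0 in ℝ². -/
theorem stmt_11 (a : ℝ) (ha : 0 < a) (lam : ℝ)
    (hlam : ∀ m : ℤ × ℤ, lam ≠ ‖xiv a m + KD a‖ ^ 2) :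
    Summable (fun m : ℤ × ℤ =>
      ((‖xiv a m + KD a‖ ^ 2 - lam) ^ 2)⁻¹ • (xiv a m + KD a)) ∧
    ∑' m : ℤ × ℤ,
      ((‖xiv a m + KD a‖ ^ 2 - lam) ^ 2)⁻¹ • (xiv a m + KD a) = (0 : E2) := by
  have hsum := summable_main a ha lam
  refine ⟨hsum, ?_⟩
  set f : ℤ × ℤ → E2 := fun m =>
    ((‖xiv a m + KD a‖ ^ 2 - lam) ^ 2)⁻¹ • (xiv a m + KD a) with hf
  have hkey : ∀ m : ℤ × ℤ, f (Tequiv m) = Lrot (f m) := by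
    intro m
    show f (T m) = Lrot (f m)
    rw [hf]
    simp only
    rw [rot_identity a m, norm_Rrot, map_smul, Lrot_apply]
  set S : E2 := ∑' m, f m with hS
  have h1 : Lrot S = S := by
    calc Lrot S = ∑' m, Lrot (f m) := Lrot.map_tsum hsum
      _ = ∑' m, f (Tequiv m) := tsum_congr (fun m => (hkey m).symm)
      _ = S := Tequiv.tsum_eq f
  have hR : Rrot S = S := h1
  have h2 := rot_sum S
  rw [hR, hR] at h2
  have h3 : (3:ℝ) • S = 0 := by
    rw [show (3:ℝ) = 1 + 1 + 1 by norm_num, add_smul, add_smul, one_smul]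
    exact h2
  have := (smul_eq_zero.mp h3).resolve_left (by norm_num)
  exact this
end
end

section
/- Let λ ∈ ℝ be such that λ ≠ ‖ξ_m + K‖² for every m ∈ ℤ². Then for every r > 0, the finite sum ∑ exp(i·ξ_m·x₀)/(‖ξ_m + K‖² − λ), taken over all m ∈ ℤ² with ‖ξ_m + K‖ ≤ r, equals 0. (This expresses that the renormalized Green's function g_λ(x₀, K), defined by spherical cutoff, vanishes at the Dirac point.) -/
open Real

noncomputable section

lemma vec_apply0 (x y : ℝ) : vec x y 0 = x := rfl
lemma vec_apply1 (x y : ℝ) : vec x y 1 = y := rfl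

lemma T_T_T (m : ℤ × ℤ) : T (T (T m)) = m := by
  simp only [T, Prod.ext_iff]
  constructor <;> ring

/-- Applying T to the index corresponds to a rotation by 2π/3 of ξ_m + K, hence
preserves the norm. -/
lemma norm_T (a : ℝ) (m : ℤ × ℤ) : ‖xiv a (T m) + KD a‖ = ‖xiv a m + KD a‖ := by
  have h3 : Real.sqrt 3 * Real.sqrt 3 = 3 := Real.mul_self_sqrt (by norm_num)
  rw [EuclideanSpace.norm_eq, EuclideanSpace.norm_eq]
  congr 1
  simp only [Fin.sum_univ_two, xiv, KD, k1, k2, T, vec_apply0, vec_apply1,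
    PiLp.add_apply, PiLp.smul_apply, smul_eq_mul, Int.cast_sub, Int.cast_add,
    Int.cast_neg, Int.cast_one, Real.norm_eq_abs, sq_abs]
  set s := Real.sqrt 3
  set c := 4 * π / (a * s)
  linear_combination (c ^ 2 / 4 * (((m.2 : ℝ) + 1 / 3) ^ 2 -
    (((m.1 : ℝ) + 2 / 3) - ((m.2 : ℝ) + 1 / 3)) ^ 2)) * h3

open RealInnerProductSpace in
lemma inner_x0 (a : ℝ) (ha : a ≠ 0) (m : ℤ × ℤ) :
    (⟪xiv a m, x0 a⟫ : ℝ) = 4 * π * ((m.1 : ℝ) + m.2) / 3 := by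
  have hs : Real.sqrt 3 ≠ 0 := by positivity
  simp only [PiLp.inner_apply, RCLike.inner_apply, conj_trivial, Fin.sum_univ_two,
    xiv, x0, v1, v2, k1, k2, vec_apply0, vec_apply1,
    PiLp.add_apply, PiLp.smul_apply, smul_eq_mul]
  field_simp
  ring

lemma omega_ne_one : Complex.exp (-(8 * π / 3) * Complex.I) ≠ 1 := by
  intro h
  rw [Complex.exp_eq_one_iff] at h
  obtain ⟨n, hn⟩ := h
  have h2 : (-(8 * (π : ℂ) / 3)) = n * (2 * π) :=
    mul_right_cancel₀ Complex.I_ne_zero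
      (by rw [hn]; ring_nf :
        (-(8 * (π : ℂ) / 3)) * Complex.I = (n * (2 * π)) * Complex.I)
  have h3 : (-(8 * π / 3) : ℝ) = (n : ℝ) * (2 * π) := by exact_mod_cast h2
  have h4 : ((n : ℝ) * 6) * π = (-8) * π := by linear_combination -3 * h3
  have h5 : (n : ℝ) * 6 = -8 := mul_right_cancel₀ Real.pi_ne_zero h4
  have : (n : ℤ) * 6 = -8 := by exact_mod_cast h5
  omega

open RealInnerProductSpace in
/-- for every spherical cutoff r > 0, the finite sum of
exp(i ξ_m·x₀)/(‖ξ_m + K‖² − λ) over ‖ξ_m + K‖ ≤ r vanishes; i.e. the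
renormalized Green's function g_λ(x₀, K) vanishes at the Dirac point. -/
theorem stmt_12 (a : ℝ) (ha : 0 < a) (lam : ℝ)
    (hlam : ∀ m : ℤ × ℤ, lam ≠ ‖xiv a m + KD a‖ ^ 2) (r : ℝ) (hr : 0 < r)
    (hfin : {m : ℤ × ℤ | ‖xiv a m + KD a‖ ≤ r}.Finite) :
    ∑ m ∈ hfin.toFinset,
      Complex.exp (Complex.I * (⟪xiv a m, x0 a⟫ : ℝ)) /
        ((‖xiv a m + KD a‖ ^ 2 - lam : ℝ) : ℂ) = 0 := by
  set ω : ℂ := Complex.exp (-(8 * π / 3) * Complex.I) with hω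
  set f : ℤ × ℤ → ℂ := fun m =>
    Complex.exp (Complex.I * (⟪xiv a m, x0 a⟫ : ℝ)) /
      ((‖xiv a m + KD a‖ ^ 2 - lam : ℝ) : ℂ) with hf
  set s := hfin.toFinset with hs
  -- membership is preserved by T
  have hmem : ∀ m, m ∈ s → T m ∈ s := by
    intro m hm
    rw [hs, Set.Finite.mem_toFinset] at *
    simpa [Set.mem_setOf_eq, norm_T] using hm
  -- f (T m) = ω * f m
  have hfT : ∀ m : ℤ × ℤ, f (T m) = ω * f m := by
    intro m
    have hnum : Complex.exp (Complex.I * (⟪xiv a (T m), x0 a⟫ : ℝ)) =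
        ω * Complex.exp (Complex.I * (⟪xiv a m, x0 a⟫ : ℝ)) := by
      rw [inner_x0 a ha.ne', inner_x0 a ha.ne', hω]
      rw [show Complex.I * ((4 * π * (((T m).1 : ℝ) + ((T m).2 : ℝ)) / 3 : ℝ) : ℂ) =
          (-(8 * (π : ℂ) / 3) * Complex.I) +
            Complex.I * ((4 * π * ((m.1 : ℝ) + (m.2 : ℝ)) / 3 : ℝ) : ℂ) +
            ((-2 * m.1 : ℤ) * (2 * (π : ℂ) * Complex.I)) by
        simp only [T]
        push_cast
        ring]
      rw [Complex.exp_add, Complex.exp_int_mul_two_pi_mul_I, mul_one, Complex.exp_add]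
    rw [hf]
    simp only
    rw [hnum, norm_T, mul_div_assoc]
  -- reindex the sum by T
  have hreindex : ∑ m ∈ s, f m = ∑ m ∈ s, f (T m) := by
    refine Finset.sum_nbij' (i := fun m => T (T m)) (j := fun m => T m) ?_ ?_ ?_ ?_ ?_
    · intro m hm; exact hmem _ (hmem _ hm)
    · intro m hm; exact hmem _ hm
    · intro m _; exact T_T_T m
    · intro m _; exact T_T_T m
    · intro m _; rw [T_T_T]
  have h465 : ∑ m ∈ s, f (T m) = ω * ∑ m ∈ s, f m := by
    rw [Finset.mul_sum]
    exact Finset.sum_congr rfl fun m _ => hfT m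
  have hkey : (ω - 1) * ∑ m ∈ s, f m = 0 := by
    linear_combination - (hreindex.trans h465)
  rcases mul_eq_zero.mp hkey with h | h
  · exact absurd (sub_eq_zero.mp h) omega_ne_one
  · exact h
end
end

section
/- Let k ∈ ℝ² and let λ ∈ ℝ satisfy λ ≠ ‖ξ_m + k‖² for every m ∈ ℤ². Then the function m ↦ 1/(‖ξ_m + k‖² − λ) − ‖ξ_m‖²/(‖ξ_m‖⁴ + 1) is absolutely summable over ℤ². -/
open Real
set_option maxHeartbeats 1000000

noncomputable section

lemma norm_xiv_sq (a : ℝ) (ha : a ≠ 0) (m : ℤ × ℤ) :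
    ‖xiv a m‖^2 = (4 * π / (a * Real.sqrt 3))^2 * ((m.1:ℝ)^2 - m.1*m.2 + m.2^2) := by
  have h3 : Real.sqrt 3 ^ 2 = 3 := Real.sq_sqrt (by norm_num)
  have hs0 : Real.sqrt 3 ≠ 0 := by positivity
  rw [EuclideanSpace.norm_eq, Real.sq_sqrt (by positivity)]
  simp only [xiv, k1, k2, vec, Fin.sum_univ_two, PiLp.add_apply, PiLp.smul_apply,
    WithLp.equiv_symm_apply, WithLp.ofLp_toLp, Matrix.cons_val_zero, Matrix.cons_val_one, Matrix.head_cons,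
    smul_eq_mul, Real.norm_eq_abs, sq_abs]
  field_simp
  linear_combination (4*π^2*((m.1:ℝ) - m.2)^2 + π^2*(m.1:ℝ)*m.2*(8 - 32*a^2*Real.sqrt 3^2) + π^2*((m.1:ℝ)^2+(m.2:ℝ)^2)*(-4 + 16*a^2*Real.sqrt 3^2) + (m.1:ℝ)*m.2*(-2 + 32*π^2*a^2*Real.sqrt 3^2) + ((m.1:ℝ)^2+(m.2:ℝ)^2)*(1 - 16*π^2*a^2*Real.sqrt 3^2)) * h3

lemma summable_aux : Summable (fun n : ℤ => (1 + |(n:ℝ)|) ^ (-(3/2) : ℝ)) := by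
  refine Summable.of_norm_bounded_eventually (g := fun n : ℤ => |(n:ℝ)| ^ (-(3/2) : ℝ))
    (Real.summable_abs_int_rpow (by norm_num)) ?_
  rw [Filter.eventually_cofinite]
  refine Set.Finite.subset (Set.finite_singleton 0) ?_
  intro n hn
  simp only [Set.mem_setOf_eq, Set.mem_singleton_iff] at *
  by_contra h0
  apply hn
  have hn0 : (0:ℝ) < |(n:ℝ)| := abs_pos.mpr (Int.cast_ne_zero.mpr h0)
  rw [Real.norm_eq_abs, abs_of_nonneg (Real.rpow_nonneg (by positivity) _)]
  exact Real.rpow_le_rpow_of_nonpos hn0 (by linarith) (by norm_num)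

lemma finite_ball (M : ℝ) : {m : ℤ × ℤ | (m.1:ℝ)^2 + (m.2:ℝ)^2 ≤ M}.Finite := by
  set N : ℤ := ⌈M⌉ + 1 with hN
  apply Set.Finite.subset (Set.finite_Icc ((-N, -N) : ℤ × ℤ) (N, N))
  intro m hm
  simp only [Set.mem_setOf_eq] at hm
  have hceil : (M:ℝ) ≤ (⌈M⌉ : ℤ) := Int.le_ceil M
  have key : ∀ n : ℤ, (n:ℝ)^2 ≤ M → -N ≤ n ∧ n ≤ N := by
    intro n hn
    have h1 : (|n| : ℝ) ≤ (n:ℝ)^2 + 1 := by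
      push_cast
      nlinarith [sq_nonneg (|(n:ℝ)| - 1), abs_nonneg (n:ℝ), sq_abs (n:ℝ)]
    have h2 : (|n| : ℝ) ≤ (N : ℝ) := by rw [hN]; push_cast; linarith
    have h3 : |n| ≤ N := by exact_mod_cast h2
    rw [abs_le] at h3; exact h3
  have h1 := key m.1 (by nlinarith [sq_nonneg (m.2:ℝ)])
  have h2 := key m.2 (by nlinarith [sq_nonneg (m.1:ℝ)])
  constructor <;> exact ⟨by simp [h1, h2], by simp [h1, h2]⟩

set_option maxHeartbeats 1000000

lemma main_real (K L lam A B x y b : ℝ) (hb : 0 < b)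
    (hK0 : 0 ≤ K) (hL : |lam| ≤ L)
    (hB : 4*K + 2*L + 2 ≤ B)
    (hAub : A ≤ B^2 + 2*B*K + K^2) (hAlb : B^2 - 2*B*K ≤ A)
    (hx0 : 0 ≤ x) (hy0 : 0 ≤ y) (hsum1 : 1 ≤ x^2 + y^2)
    (hlow : b^2 * (x^2 + y^2) ≤ 2*B^2) :
    |1/(A - lam) - B^2/(B^4+1)| ≤
      (2*(1 + L + 2*K + K^2)*(16/b^2)^((3:ℝ)/2)) * ((1+x)^(-(3/2) : ℝ) * (1+y)^(-(3/2) : ℝ)) := by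
  have hL0 : 0 ≤ L := le_trans (abs_nonneg lam) hL
  have hC1 : 1 ≤ 1 + L + 2*K + K^2 := by nlinarith
  set C₁ : ℝ := 1 + L + 2*K + K^2 with hC1_def
  clear_value C₁
  have hC10 : 0 ≤ C₁ := by linarith
  have hB1 : 1 ≤ B := by linarith
  have hB0 : (0:ℝ) < B := by linarith
  have hlam2 : lam ≤ L := le_trans (le_abs_self lam) hL
  have hlam3 : -L ≤ lam := by
    have := neg_abs_le lam; linarith
  have hBL : L ≤ B * L := le_mul_of_one_le_left hL0 hB1
  have hD2 : B^2/2 ≤ A - lam := by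
    have h1 : 0 ≤ B * (B - 4*K - 2*L - 2) := mul_nonneg hB0.le (by linarith)
    nlinarith
  have hDpos : (0:ℝ) < A - lam := lt_of_lt_of_le (by positivity) hD2
  have habs : |B^2 - A| ≤ 2*B*K + K^2 :=
    abs_le.mpr ⟨by linarith, by linarith [sq_nonneg K]⟩
  have hB23 : B^2 ≤ B^3 := by nlinarith [mul_nonneg (by linarith : (0:ℝ) ≤ B - 1) (sq_nonneg B)]
  have hB31 : 1 ≤ B^3 := by
    nlinarith [mul_nonneg (by linarith : (0:ℝ) ≤ B - 1) (by positivity : (0:ℝ) ≤ B^2 + B + 1)]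
  have hnum : |B^4 + 1 - B^2*(A - lam)| ≤ C₁ * B^3 := by
    have he : B^4 + 1 - B^2*(A - lam) = 1 + B^2*lam + B^2*(B^2 - A) := by ring
    rw [he]
    have h1 : |1 + B^2*lam + B^2*(B^2 - A)| ≤ |(1:ℝ)| + |B^2*lam| + |B^2*(B^2 - A)| :=
      abs_add_three _ _ _
    rw [abs_one, abs_mul, abs_mul, abs_of_nonneg (by positivity : (0:ℝ) ≤ B^2)] at h1
    have h2 : B^2 * |lam| ≤ B^3 * L :=
      mul_le_mul hB23 hL (abs_nonneg lam) (by positivity)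
    have h3 : B^2 * |B^2 - A| ≤ B^2 * (2*B*K + K^2) :=
      mul_le_mul_of_nonneg_left habs (by positivity)
    have h4 : B^2 * (2*B*K + K^2) ≤ 2*K*B^3 + K^2*B^3 := by nlinarith
    calc |1 + B^2*lam + B^2*(B^2 - A)| ≤ 1 + B^2*|lam| + B^2*|B^2-A| := h1
      _ ≤ B^3 + B^3*L + (2*K*B^3 + K^2*B^3) := by linarith
      _ = C₁ * B^3 := by rw [hC1_def]; ring
  have hden : (0:ℝ) < (A - lam) * (B^4 + 1) := mul_pos hDpos (by positivity)
  have hFeq : |1 / (A - lam) - B^2 / (B^4 + 1)|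
      = |B^4 + 1 - B^2*(A - lam)| / ((A - lam)*(B^4+1)) := by
    rw [div_sub_div _ _ (ne_of_gt hDpos) (by positivity : (B^4+1) ≠ 0), abs_div,
      abs_of_pos hden]
    congr 1
    congr 1
    ring
  have hF : |1 / (A - lam) - B^2 / (B^4 + 1)| ≤ (2*C₁) / B^3 := by
    rw [hFeq, div_le_div_iff₀ hden (by positivity)]
    have h5 : |B^4 + 1 - B^2*(A-lam)| * B^3 ≤ (C₁*B^3) * B^3 :=
      mul_le_mul_of_nonneg_right hnum (by positivity)
    have h6 := mul_le_mul_of_nonneg_left hD2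
      (mul_nonneg (by linarith : (0:ℝ) ≤ 2*C₁) (by positivity : (0:ℝ) ≤ B^4+1))
    have h7 : (0:ℝ) ≤ C₁*B^2 := mul_nonneg hC10 (by positivity)
    linarith [h5, h6, h7]
  have hc2 : (0:ℝ) < 16 / b^2 := by positivity
  set c₂ : ℝ := 16 / b^2 with hc2_def
  have hxy : (1+x)*(1+y) ≤ 8*(x^2 + y^2) := by
    nlinarith [sq_nonneg (x-1), sq_nonneg (y-1), sq_nonneg (x-y)]
  have hP : (1+x)*(1+y) ≤ c₂ * B^2 := by
    rw [hc2_def, div_mul_eq_mul_div, le_div_iff₀ (by positivity : (0:ℝ) < b^2)]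
    nlinarith [mul_le_mul_of_nonneg_left hxy (by positivity : (0:ℝ) ≤ b^2)]
  have hB3eq : ((B^2 : ℝ)) ^ ((3:ℝ)/2) = B^3 := by
    rw [← Real.rpow_natCast B 2, ← Real.rpow_mul hB0.le, ← Real.rpow_natCast B 3]
    norm_num
  have hPpow : ((1+x)*(1+y)) ^ ((3:ℝ)/2) ≤ c₂^((3:ℝ)/2) * B^3 := by
    calc ((1+x)*(1+y)) ^ ((3:ℝ)/2) ≤ (c₂ * B^2) ^ ((3:ℝ)/2) :=
          Real.rpow_le_rpow (by positivity) hP (by norm_num)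
      _ = c₂^((3:ℝ)/2) * (B^2)^((3:ℝ)/2) := Real.mul_rpow hc2.le (by positivity)
      _ = c₂^((3:ℝ)/2) * B^3 := by rw [hB3eq]
  have hgg : (1+x)^(-(3/2) : ℝ) * (1+y)^(-(3/2) : ℝ) = (((1+x)*(1+y)) ^ ((3:ℝ)/2))⁻¹ := by
    rw [← Real.mul_rpow (by positivity) (by positivity), Real.rpow_neg (by positivity)]
  have hPpos : (0:ℝ) < ((1+x)*(1+y)) ^ ((3:ℝ)/2) := Real.rpow_pos_of_pos (by positivity) _
  have hfinal : (2*C₁) / B^3 ≤ (2*C₁*c₂^((3:ℝ)/2)) * (((1+x)*(1+y)) ^ ((3:ℝ)/2))⁻¹ := by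
    rw [← div_eq_mul_inv, div_le_div_iff₀ (by positivity) hPpos]
    have h8 := mul_le_mul_of_nonneg_left hPpow (by linarith : (0:ℝ) ≤ 2*C₁)
    nlinarith [h8]
  rw [hgg]
  exact hF.trans hfinal

/-- m ↦ 1/(‖ξ_m + k‖² − λ) − ‖ξ_m‖²/(‖ξ_m‖⁴ + 1) is absolutely
summable over ℤ². -/
theorem stmt_17 (a : ℝ) (ha : 0 < a) (k : E2) (lam : ℝ)
    (hlam : ∀ m : ℤ × ℤ, lam ≠ ‖xiv a m + k‖ ^ 2) :
    Summable (fun m : ℤ × ℤ =>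
      |1 / (‖xiv a m + k‖ ^ 2 - lam) - ‖xiv a m‖ ^ 2 / (‖xiv a m‖ ^ 4 + 1)|) := by
  have hb : (0:ℝ) < 4 * π / (a * Real.sqrt 3) := by positivity
  have hK0 : (0:ℝ) ≤ ‖k‖ := norm_nonneg k
  have hL0 : (0:ℝ) ≤ |lam| := abs_nonneg lam
  have hlow : ∀ m : ℤ × ℤ,
      (4*π/(a*Real.sqrt 3))^2 * ((m.1:ℝ)^2 + (m.2:ℝ)^2) ≤ 2*‖xiv a m‖^2 := by
    intro m
    rw [norm_xiv_sq a (ne_of_gt ha) m]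
    nlinarith [sq_nonneg ((m.1:ℝ) - m.2), sq_nonneg (4*π/(a*Real.sqrt 3))]
  have key : ∀ m : ℤ × ℤ, 4*‖k‖ + 2*|lam| + 2 ≤ ‖xiv a m‖ →
      |1 / (‖xiv a m + k‖ ^ 2 - lam) - ‖xiv a m‖ ^ 2 / (‖xiv a m‖ ^ 4 + 1)| ≤
        (2*(1 + |lam| + 2*‖k‖ + ‖k‖^2)*(16/(4*π/(a*Real.sqrt 3))^2)^((3:ℝ)/2)) *
          ((1+|(m.1:ℝ)|)^(-(3/2) : ℝ) * (1+|(m.2:ℝ)|)^(-(3/2) : ℝ)) := by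
    intro m hB
    have hB1 : (1:ℝ) ≤ ‖xiv a m‖ := by linarith
    have hKB : ‖k‖ ≤ ‖xiv a m‖ := by linarith
    refine main_real ‖k‖ |lam| lam (‖xiv a m + k‖^2) ‖xiv a m‖ |(m.1:ℝ)| |(m.2:ℝ)|
      (4*π/(a*Real.sqrt 3)) hb hK0 (le_refl _) hB ?_ ?_ (abs_nonneg _) (abs_nonneg _) ?_ ?_
    · have h2 : ‖xiv a m + k‖^2 ≤ (‖xiv a m‖ + ‖k‖)^2 :=
        pow_le_pow_left₀ (norm_nonneg _) (norm_add_le _ _) 2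
      nlinarith [h2]
    · have h1 : ‖xiv a m‖ ≤ ‖xiv a m + k‖ + ‖k‖ := by
        have := norm_add_le (xiv a m + k) (-k)
        simpa using this
      have h2 : (‖xiv a m‖ - ‖k‖)^2 ≤ ‖xiv a m + k‖^2 :=
        pow_le_pow_left₀ (by linarith) (by linarith) 2
      nlinarith [h2, sq_nonneg ‖k‖]
    · -- 1 ≤ x² + y²
      rw [sq_abs, sq_abs]
      have hm0 : m ≠ (0, 0) := by
        rintro rfl
        have h0 : xiv a (0, 0) = 0 := by simp [xiv]
        rw [h0, norm_zero] at hB1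
        linarith
      have hcases : m.1 ≠ 0 ∨ m.2 ≠ 0 := by
        by_contra h; push_neg at h; exact hm0 (Prod.ext h.1 h.2)
      have sq1 : ∀ n : ℤ, n ≠ 0 → (1:ℝ) ≤ (n:ℝ)^2 := by
        intro n hn
        have h1 : 1 ≤ |n| := Int.one_le_abs hn
        have h2 : (1:ℝ) ≤ |(n:ℝ)| := by
          have : ((1:ℤ):ℝ) ≤ ((|n|:ℤ):ℝ) := Int.cast_le.mpr h1
          push_cast at this
          simpa using this
        nlinarith [sq_abs (n:ℝ)]
      rcases hcases with h | h
      · nlinarith [sq1 m.1 h, sq_nonneg (m.2:ℝ)]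
      · nlinarith [sq1 m.2 h, sq_nonneg (m.1:ℝ)]
    · rw [sq_abs, sq_abs]
      exact hlow m
  -- assemble
  have hgs : Summable (fun n : ℤ => (1 + |(n:ℝ)|) ^ (-(3/2) : ℝ)) := summable_aux
  have hgpos : ∀ n : ℤ, 0 ≤ (1 + |(n:ℝ)|) ^ (-(3/2) : ℝ) :=
    fun n => Real.rpow_nonneg (by positivity) _
  refine Summable.of_norm_bounded_eventually
    (g := fun m : ℤ × ℤ =>
      (2*(1 + |lam| + 2*‖k‖ + ‖k‖^2)*(16/(4*π/(a*Real.sqrt 3))^2)^((3:ℝ)/2)) *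
        ((1+|(m.1:ℝ)|)^(-(3/2) : ℝ) * (1+|(m.2:ℝ)|)^(-(3/2) : ℝ)))
    (Summable.mul_left _ (hgs.mul_of_nonneg hgs hgpos hgpos)) ?_
  rw [Filter.eventually_cofinite]
  apply Set.Finite.subset
    (finite_ball (2 * (4*‖k‖ + 2*|lam| + 2)^2 / (4*π/(a*Real.sqrt 3))^2))
  intro m hm
  simp only [Set.mem_setOf_eq] at hm ⊢
  by_contra hcon
  push_neg at hcon
  apply hm
  have hBR : 4*‖k‖ + 2*|lam| + 2 ≤ ‖xiv a m‖ := by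
    by_contra hlt
    push_neg at hlt
    have h1 := hlow m
    have hR0 : (0:ℝ) < 4*‖k‖ + 2*|lam| + 2 := by linarith
    have h2 : ‖xiv a m‖^2 ≤ (4*‖k‖ + 2*|lam| + 2)^2 := by
      nlinarith [norm_nonneg (xiv a m)]
    have h3 : (m.1:ℝ)^2 + (m.2:ℝ)^2 ≤
        2 * (4*‖k‖ + 2*|lam| + 2)^2 / (4*π/(a*Real.sqrt 3))^2 := by
      rw [le_div_iff₀ (by positivity : (0:ℝ) < (4*π/(a*Real.sqrt 3))^2)]
      nlinarith [h1, h2]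
    linarith [hcon]
  rw [Real.norm_eq_abs, abs_abs]
  exact key m hBR
end
end
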